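/- arXiv:2505.04145 — 2 statements merged into one kernel-verified Lean document; each statement's English description precedes it below -/
import Mathlib

section
/- Greedy guarantee (Nemhauser–Wolsey–Fisher): let f: 2^V → ℝ be monotone submodular with f(∅) = 0 on a finite set V, and let S_k be the result of k steps of the greedy algorithm (at each step adding an element maximizing the marginal gain). Then f(S_k) ≥ (1 − 1/e) · max{ f(S) : S ⊆ V, |S| ≤ k }. -/
/-- Submodular subadditivity of marginal gains over a set. -/
lemma submod_union_sum {V : Type*} [DecidableEq V]
    (f : Finset V → ℝ)
    (hmono : ∀ A B : Finset V, A ⊆ B → f A ≤ f B)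
    (hsub : ∀ A B : Finset V, A ⊆ B → ∀ v ∉ B,
        f (insert v B) - f B ≤ f (insert v A) - f A)
    (A U : Finset V) :
    f (A ∪ U) - f A ≤ ∑ v ∈ U, (f (insert v A) - f A) := by
  induction U using Finset.induction_on with
  | empty => simp
  | @insert a s ha ih =>
    rw [Finset.sum_insert ha]
    have hU : A ∪ insert a s = insert a (A ∪ s) := by
      ext x; simp [Finset.mem_union, Finset.mem_insert, or_left_comm]
    rw [hU]
    have h1 : f (insert a (A ∪ s)) - f (A ∪ s) ≤ f (insert a A) - f A := by
      by_cases hmem : a ∈ A ∪ s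
      · rw [Finset.insert_eq_self.mpr hmem]
        have := hmono A (insert a A) (Finset.subset_insert _ _)
        linarith
      · exact hsub A (A ∪ s) Finset.subset_union_left a hmem
    linarith

/-- Nemhauser–Wolsey–Fisher greedy guarantee: for `f` monotone submodular with
`f(∅) = 0`, and `S` the greedy iterates (each step adding an element
maximizing the marginal gain), `f(S k) ≥ (1 − 1/e) · f(T)` for every `T` with
`|T| ≤ k`, i.e. `f(S k) ≥ (1 − 1/e) · max{f(T) : |T| ≤ k}`. -/
theorem greedy_guarantee {V : Type*} [Fintype V] [DecidableEq V]
    (f : Finset V → ℝ)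
    (hmono : ∀ A B : Finset V, A ⊆ B → f A ≤ f B)
    (hsub : ∀ A B : Finset V, A ⊆ B → ∀ v ∉ B,
        f (insert v B) - f B ≤ f (insert v A) - f A)
    (hempty : f ∅ = 0)
    (k : ℕ) (hk : 0 < k)
    (S : ℕ → Finset V) (hS0 : S 0 = ∅)
    (hgreedy : ∀ j < k, ∃ v ∉ S j,
        S (j + 1) = insert v (S j) ∧
        ∀ w ∉ S j, f (insert w (S j)) - f (S j) ≤ f (insert v (S j)) - f (S j)) :
    ∀ T : Finset V, T.card ≤ k →
      (1 - (Real.exp 1)⁻¹) * f T ≤ f (S k) := by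
  intro T hT
  have hfT : 0 ≤ f T := by
    rw [← hempty]; exact hmono ∅ T (Finset.empty_subset T)
  have hkpos : (0:ℝ) < (k:ℝ) := by exact_mod_cast hk
  have hk1 : (1:ℝ) ≤ (k:ℝ) := by exact_mod_cast hk
  have hr0 : (0:ℝ) ≤ 1 - 1/(k:ℝ) := by
    rw [sub_nonneg]
    exact div_le_one_of_le₀ hk1 (le_of_lt hkpos)
  have main : ∀ j, j ≤ k → f T - f (S j) ≤ (1 - 1/(k:ℝ))^j * f T := by
    intro j
    induction j with
    | zero => intro _; simp [hS0, hempty]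
    | succ j ih =>
      intro hj
      have hjk : j < k := hj
      have ihj := ih (le_of_lt hjk)
      obtain ⟨v, hv, hSsucc, hmax⟩ := hgreedy j hjk
      have hδ0 : 0 ≤ f (S (j+1)) - f (S j) := by
        rw [hSsucc]
        have := hmono (S j) (insert v (S j)) (Finset.subset_insert _ _)
        linarith
      have key : f T - f (S j) ≤ (k:ℝ) * (f (S (j+1)) - f (S j)) := by
        have h1 : f T ≤ f (S j ∪ (T \ S j)) := by
          apply hmono
          intro x hx
          simp only [Finset.mem_union, Finset.mem_sdiff]
          tauto
        have h2 := submod_union_sum f hmono hsub (S j) (T \ S j)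
        have h3 : ∑ w ∈ T \ S j, (f (insert w (S j)) - f (S j))
            ≤ ((T \ S j).card : ℝ) * (f (S (j+1)) - f (S j)) := by
          rw [hSsucc]
          calc ∑ w ∈ T \ S j, (f (insert w (S j)) - f (S j))
              ≤ ∑ _w ∈ T \ S j, (f (insert v (S j)) - f (S j)) :=
                Finset.sum_le_sum (fun w hw => hmax w (Finset.mem_sdiff.mp hw).2)
            _ = ((T \ S j).card : ℝ) * (f (insert v (S j)) - f (S j)) := by
                rw [Finset.sum_const, nsmul_eq_mul]
        have h4 : ((T \ S j).card : ℝ) ≤ (k:ℝ) := by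
          have : (T \ S j).card ≤ T.card := Finset.card_le_card Finset.sdiff_subset
          exact_mod_cast this.trans hT
        nlinarith [mul_le_mul_of_nonneg_right h4 hδ0]
      have hrec : f T - f (S (j+1)) ≤ (1 - 1/(k:ℝ)) * (f T - f (S j)) := by
        have hd : (f T - f (S j)) / (k:ℝ) ≤ f (S (j+1)) - f (S j) := by
          rw [div_le_iff₀ hkpos]
          nlinarith
        have : (1 - 1/(k:ℝ)) * (f T - f (S j))
            = (f T - f (S j)) - (f T - f (S j)) / (k:ℝ) := by
          field_simp
        linarith
      calc f T - f (S (j+1)) ≤ (1 - 1/(k:ℝ)) * (f T - f (S j)) := hrec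
        _ ≤ (1 - 1/(k:ℝ)) * ((1 - 1/(k:ℝ))^j * f T) :=
            mul_le_mul_of_nonneg_left ihj hr0
        _ = (1 - 1/(k:ℝ))^(j+1) * f T := by ring
  have hmain := main k le_rfl
  have hexp : (1 - 1/(k:ℝ))^k ≤ (Real.exp 1)⁻¹ := by
    have h1 : 1 - 1/(k:ℝ) ≤ Real.exp (-(1/(k:ℝ))) := by
      have := Real.add_one_le_exp (-(1/(k:ℝ)))
      linarith
    have h2 : (1 - 1/(k:ℝ))^k ≤ (Real.exp (-(1/(k:ℝ))))^k :=
      pow_le_pow_left₀ hr0 h1 k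
    have h3 : (Real.exp (-(1/(k:ℝ))))^k = Real.exp ((k:ℝ) * (-(1/(k:ℝ)))) :=
      (Real.exp_nat_mul _ k).symm
    have h4 : (k:ℝ) * (-(1/(k:ℝ))) = -1 := by
      field_simp
    rw [h3, h4, Real.exp_neg] at h2
    exact h2
  have hfin : (1 - 1/(k:ℝ))^k * f T ≤ (Real.exp 1)⁻¹ * f T :=
    mul_le_mul_of_nonneg_right hexp hfT
  linarith
end

section
/- Greedy per-step bound: if f: 2^V → ℝ is monotone submodular with f(∅) = 0, S* is an optimal set of size at most k, and S_j are the greedy iterates, then f(S_{j+1}) − f(S_j) ≥ (f(S*) − f(S_j))/k for each j; consequently f(S*) − f(S_j) ≤ (1 − 1/k)^j f(S*). -/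
private lemma greedy_aux {V : Type*} [DecidableEq V]
    (f : Finset V → ℝ)
    (hsub : ∀ A B : Finset V, A ⊆ B → ∀ v ∉ B,
        f (insert v B) - f B ≤ f (insert v A) - f A)
    (B : Finset V) :
    ∀ D : Finset V, Disjoint D B →
      f (B ∪ D) ≤ f B + ∑ v ∈ D, (f (insert v B) - f B) := by
  intro D
  induction D using Finset.induction_on with
  | empty => simp
  | @insert a D ha ih =>
    intro hdisj
    have hdisj' : Disjoint D B := (Finset.disjoint_insert_left.mp hdisj).2
    have haB : a ∉ B := (Finset.disjoint_insert_left.mp hdisj).1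
    have haBD : a ∉ B ∪ D := by simp [haB, ha]
    have h1 : f (insert a (B ∪ D)) - f (B ∪ D) ≤ f (insert a B) - f B :=
      hsub B (B ∪ D) Finset.subset_union_left a haBD
    have h2 := ih hdisj'
    rw [Finset.union_insert, Finset.sum_insert ha]
    linarith

/-- Greedy per-step bound: for `f` monotone submodular with `f(∅) = 0`, `S*`
optimal among sets of size `≤ k`, and `S` the greedy iterates,
`f(S_{j+1}) − f(S_j) ≥ (f(S*) − f(S_j))/k` for each `j < k`; consequently
`f(S*) − f(S_j) ≤ (1 − 1/k)^j · f(S*)` for `j ≤ k`. -/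
theorem greedy_per_step_bound {V : Type*} [Fintype V] [DecidableEq V]
    (f : Finset V → ℝ)
    (hmono : ∀ A B : Finset V, A ⊆ B → f A ≤ f B)
    (hsub : ∀ A B : Finset V, A ⊆ B → ∀ v ∉ B,
        f (insert v B) - f B ≤ f (insert v A) - f A)
    (hempty : f ∅ = 0)
    (k : ℕ) (hk : 0 < k)
    (Sstar : Finset V) (hcard : Sstar.card ≤ k)
    (hopt : ∀ T : Finset V, T.card ≤ k → f T ≤ f Sstar)
    (S : ℕ → Finset V) (hS0 : S 0 = ∅)
    (hgreedy : ∀ j < k, ∃ v ∉ S j,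
        S (j + 1) = insert v (S j) ∧
        ∀ w ∉ S j, f (insert w (S j)) - f (S j) ≤ f (insert v (S j)) - f (S j)) :
    (∀ j < k, (f Sstar - f (S j)) / k ≤ f (S (j + 1)) - f (S j)) ∧
    (∀ j ≤ k, f Sstar - f (S j) ≤ (1 - 1 / (k : ℝ)) ^ j * f Sstar) := by
  have hk' : (0 : ℝ) < (k : ℝ) := by exact_mod_cast hk
  have step : ∀ j < k, (f Sstar - f (S j)) / k ≤ f (S (j + 1)) - f (S j) := by
    intro j hj
    obtain ⟨v, hv, hSj1, hmax⟩ := hgreedy j hj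
    set g := f (S (j + 1)) - f (S j) with hg
    have hgnn : 0 ≤ g := by
      rw [hg, hSj1]
      have := hmono (S j) (insert v (S j)) (Finset.subset_insert _ _)
      linarith
    -- key inequality
    have hkey : f Sstar ≤ f (S j) + ∑ w ∈ Sstar \ S j, (f (insert w (S j)) - f (S j)) := by
      have hd : Disjoint (Sstar \ S j) (S j) := Finset.sdiff_disjoint
      have h1 := greedy_aux f hsub (S j) (Sstar \ S j) hd
      have h2 : Sstar ⊆ S j ∪ (Sstar \ S j) := by
        intro x hx
        by_cases hxS : x ∈ S j <;> simp [hxS, hx]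
      have := hmono Sstar (S j ∪ (Sstar \ S j)) h2
      linarith
    have hsum : ∑ w ∈ Sstar \ S j, (f (insert w (S j)) - f (S j))
        ≤ (Sstar \ S j).card * g := by
      calc ∑ w ∈ Sstar \ S j, (f (insert w (S j)) - f (S j))
          ≤ ∑ _w ∈ Sstar \ S j, g := by
            apply Finset.sum_le_sum
            intro w hw
            have hwS : w ∉ S j := (Finset.mem_sdiff.mp hw).2
            rw [hg, hSj1]
            exact hmax w hwS
        _ = (Sstar \ S j).card * g := by simp [Finset.sum_const, nsmul_eq_mul]
    have hcard' : ((Sstar \ S j).card : ℝ) ≤ (k : ℝ) := by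
      have h1 : (Sstar \ S j).card ≤ Sstar.card := Finset.card_le_card (Finset.sdiff_subset)
      exact_mod_cast le_trans h1 hcard
    have : ((Sstar \ S j).card : ℝ) * g ≤ (k : ℝ) * g :=
      mul_le_mul_of_nonneg_right hcard' hgnn
    have hfinal : f Sstar - f (S j) ≤ (k : ℝ) * g := by linarith
    rw [div_le_iff₀ hk'] at *
    linarith [hfinal]
  refine ⟨step, ?_⟩
  have hstar0 : 0 ≤ f Sstar := by
    have := hmono ∅ Sstar (Finset.empty_subset _)
    linarith
  intro j hj
  induction j with
  | zero => simp [hS0, hempty]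
  | succ j ih =>
    have hjk : j < k := hj
    have ih' := ih (le_of_lt hjk)
    have hstep := step j hjk
    rw [div_le_iff₀ hk'] at hstep
    have h1mk : (0 : ℝ) ≤ 1 - 1 / (k : ℝ) := by
      have : 1 / (k : ℝ) ≤ 1 := by
        rw [div_le_one hk']
        exact_mod_cast hk
      linarith
    have : f Sstar - f (S (j + 1)) ≤ (1 - 1 / (k : ℝ)) * (f Sstar - f (S j)) := by
      have e : (1 - 1 / (k : ℝ)) * (f Sstar - f (S j))
          = (f Sstar - f (S j)) - (f Sstar - f (S j)) / k := by ring
      have hstep0 := step j hjk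
      linarith
    calc f Sstar - f (S (j + 1)) ≤ (1 - 1 / (k : ℝ)) * (f Sstar - f (S j)) := this
      _ ≤ (1 - 1 / (k : ℝ)) * ((1 - 1 / (k : ℝ)) ^ j * f Sstar) :=
          mul_le_mul_of_nonneg_left ih' h1mk
      _ = (1 - 1 / (k : ℝ)) ^ (j + 1) * f Sstar := by ring
end
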